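/- arXiv:2206.02198 — 7 statements merged into one kernel-verified Lean document; each statement's English description precedes it below -/
import Mathlib

section
/- For λ ≥ 0, the vector λ·e_{123'} = (λ, λ, λ, 2λ, 2λ, 2λ, 2λ) ∈ ℝ^7 is an entropy vector of three finite-alphabet random variables if and only if λ = log₂ m for some positive integer m. -/
open Finset

/-- Probability that the discrete random variable `X` (on finite sample space `Fin N`
with probability mass function `p`) takes the value `a`. -/
noncomputable def pr {N : ℕ} (p : Fin N → ℝ) {A : Type} [DecidableEq A]
    (X : Fin N → A) (a : A) : ℝ :=
  ∑ ω, if X ω = a then p ω else 0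

/-- Base-2 Shannon entropy of the random variable `X` under the pmf `p`. -/
noncomputable def ent {N : ℕ} (p : Fin N → ℝ) {A : Type} [Fintype A] [DecidableEq A]
    (X : Fin N → A) : ℝ :=
  -∑ a, pr p X a * Real.logb 2 (pr p X a)

/-- `p` is a probability mass function. -/
def IsDist {N : ℕ} (p : Fin N → ℝ) : Prop :=
  (∀ ω, 0 ≤ p ω) ∧ ∑ ω, p ω = 1

/-- The entropy vector of three finite-alphabet random variables, with components
(H(X₁), H(X₂), H(X₃), H(X₁X₂), H(X₁X₃), H(X₂X₃), H(X₁X₂X₃)). -/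
noncomputable def entVec3 {N a₁ a₂ a₃ : ℕ} (p : Fin N → ℝ)
    (X₁ : Fin N → Fin a₁) (X₂ : Fin N → Fin a₂) (X₃ : Fin N → Fin a₃) : Fin 7 → ℝ :=
  ![ent p X₁, ent p X₂, ent p X₃,
    ent p (fun ω => (X₁ ω, X₂ ω)),
    ent p (fun ω => (X₁ ω, X₃ ω)),
    ent p (fun ω => (X₂ ω, X₃ ω)),
    ent p (fun ω => (X₁ ω, X₂ ω, X₃ ω))]

/-- `h ∈ ℝ⁷` is the entropy vector of some triple of finite-alphabet random variables. -/
def IsEntropic (h : Fin 7 → ℝ) : Prop :=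
  ∃ (N a₁ a₂ a₃ : ℕ) (p : Fin N → ℝ)
    (X₁ : Fin N → Fin a₁) (X₂ : Fin N → Fin a₂) (X₃ : Fin N → Fin a₃),
    IsDist p ∧ entVec3 p X₁ X₂ X₃ = h

noncomputable def e1 : Fin 7 → ℝ := ![1,0,0,1,1,0,1]
noncomputable def e2 : Fin 7 → ℝ := ![0,1,0,1,0,1,1]
noncomputable def e3 : Fin 7 → ℝ := ![0,0,1,0,1,1,1]
noncomputable def e12 : Fin 7 → ℝ := ![1,1,0,1,1,1,1]
noncomputable def e13 : Fin 7 → ℝ := ![1,0,1,1,1,1,1]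
noncomputable def e23 : Fin 7 → ℝ := ![0,1,1,1,1,1,1]
noncomputable def e123 : Fin 7 → ℝ := ![1,1,1,1,1,1,1]
noncomputable def e123' : Fin 7 → ℝ := ![1,1,1,2,2,2,2]


/-! If `l • e123'` is the entropy vector of `(X₁, X₂, X₃)`, then `H(XᵢXⱼ) = H(Xᵢ) + H(Xⱼ)` makes
the three variables pairwise independent, and `H(X₁X₂X₃) = H(X₁X₃) = H(X₂X₃)` makes the triple a
function of `(X₁, X₃)` and of `(X₂, X₃)`. By independence every pair `(a, b)` of values of positive
probability extends to a triple `(a, b, c)` of positive probability, and then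
`P(a) P(c) = P(a, b, c) = P(b) P(c)`. Hence all positive masses of `X₁` are equal, so `X₁` is
uniform on its support and `l = log₂ m`. Conversely, if `X₁, X₂` are independent and uniform on
`ℤ/m` and `X₃ = X₁ + X₂`, then each variable is uniform on `ℤ/m` and any two of them determine the
third and are uniform on `(ℤ/m)²`. -/

open Real InformationTheory

lemma mul_log_div_eq_sub {x y : ℝ} (h : x ≠ 0 → y ≠ 0) :
    x * log (y / x) = x * log y - x * log x := by
  rcases eq_or_ne x 0 with rfl | hx
  · simp
  · rw [log_div (h hx) hx]; ring

lemma eq_of_le_of_sum_mul_log_div_eq_zero {α : Type*} [Fintype α] {f q : α → ℝ}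
    (hf : ∀ x, 0 ≤ f x) (hfq : ∀ x, f x ≤ q x) (h : ∑ x, f x * log (q x / f x) = 0)
    {x : α} (hx : 0 < f x) : f x = q x := by
  have hterm : ∀ x ∈ univ, 0 ≤ f x * log (q x / f x) := by
    intro x _
    rcases (hf x).eq_or_lt with h0 | h0
    · simp [← h0]
    · exact mul_nonneg h0.le (log_nonneg ((one_le_div h0).2 (hfq x)))
  by_contra hne
  have hlt : 1 < q x / f x := (one_lt_div hx).2 ((hfq x).lt_of_ne hne)
  exact (mul_pos hx (log_pos hlt)).ne' ((sum_eq_zero_iff_of_nonneg hterm).1 h x (mem_univ x))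

/-- The equality case of Gibbs' inequality. -/
lemma eq_of_sum_mul_log_div_eq_zero {α : Type*} [Fintype α] {f q : α → ℝ}
    (hf : ∀ x, 0 ≤ f x) (hq : ∀ x, 0 ≤ q x) (hfq : ∀ x, q x = 0 → f x = 0)
    (hsum : ∑ x, f x = ∑ x, q x) (h : ∑ x, f x * log (q x / f x) = 0) (x : α) :
    f x = q x := by
  have hterm : ∀ x, q x * klFun (f x / q x) = -(f x * log (q x / f x)) + q x - f x := by
    intro x
    rcases (hq x).eq_or_lt with h0 | h0
    · simp [← h0, hfq x h0.symm]
    · rw [klFun, ← inv_div, log_inv]; field_simp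
  have hzero : ∑ x, q x * klFun (f x / q x) = 0 := by
    simp only [hterm, sum_sub_distrib, sum_add_distrib, sum_neg_distrib, h, hsum]; ring
  have hnonneg : ∀ x ∈ univ, 0 ≤ q x * klFun (f x / q x) := fun x _ =>
    mul_nonneg (hq x) (klFun_nonneg (div_nonneg (hf x) (hq x)))
  rcases mul_eq_zero.1 ((sum_eq_zero_iff_of_nonneg hnonneg).1 hzero x (mem_univ x)) with h0 | h1
  · rw [h0, hfq x h0]
  · have hx := (klFun_eq_zero_iff (div_nonneg (hf x) (hq x))).1 h1
    rwa [div_eq_one_iff_eq (fun h0 => by simp [h0] at hx)] at hx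

lemma card_filter_fst_eq {α β : Type*} [Fintype α] [Fintype β] [DecidableEq α] (a : α) :
    #{u : α × β | u.1 = a} = Fintype.card β :=
  card_nbij' Prod.snd (fun b => (a, b)) (by simp [Set.MapsTo]) (by simp [Set.MapsTo])
    (by simp [Set.LeftInvOn]) (by simp [Set.LeftInvOn])

lemma card_filter_snd_eq {α β : Type*} [Fintype α] [Fintype β] [DecidableEq β] (b : β) :
    #{u : α × β | u.2 = b} = Fintype.card α :=
  card_nbij' Prod.fst (fun a => (a, b)) (by simp [Set.MapsTo]) (by simp [Set.MapsTo])
    (by simp [Set.LeftInvOn]) (by simp [Set.LeftInvOn])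

lemma card_filter_add_eq {G : Type*} [AddGroup G] [Fintype G] [DecidableEq G] (a : G) :
    #{u : G × G | u.1 + u.2 = a} = Fintype.card G :=
  card_nbij' Prod.fst (fun x => (x, -x + a)) (by simp [Set.MapsTo]) (by simp [Set.MapsTo])
    (by simp [Set.LeftInvOn, ← eq_neg_add_iff_add_eq]) (by simp [Set.LeftInvOn])

lemma card_filter_eq_le_one {α β : Type*} [Fintype α] [DecidableEq β] {g : α → β}
    (hg : Function.Injective g) (b : β) : #{u | g u = b} ≤ 1 :=
  card_le_one.2 fun _ hx _ hy => hg ((mem_filter.1 hx).2.trans (mem_filter.1 hy).2.symm)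

section Probability

variable {N : ℕ} {p : Fin N → ℝ} {A B : Type} [DecidableEq A] [DecidableEq B]

lemma pr_nonneg (hp : IsDist p) (X : Fin N → A) (a : A) : 0 ≤ pr p X a :=
  sum_nonneg fun ω _ => by split_ifs <;> simp [hp.1 ω]

lemma sum_pr [Fintype A] (hp : IsDist p) (X : Fin N → A) : ∑ a, pr p X a = 1 := by
  unfold pr; rw [sum_comm]; simpa using hp.2

lemma exists_pr_pos [Fintype A] (hp : IsDist p) (X : Fin N → A) : ∃ a, 0 < pr p X a := by
  by_contra! h
  have : ∑ a, pr p X a = 0 := sum_eq_zero fun a _ => (h a).antisymm (pr_nonneg hp X a)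
  simp [sum_pr hp X] at this

lemma pr_comp [Fintype A] (X : Fin N → A) (g : A → B) (b : B) :
    pr p (fun ω => g (X ω)) b = ∑ a, if g a = b then pr p X a else 0 := by
  have hswap : ∀ a, (if g a = b then pr p X a else 0)
      = ∑ ω, if X ω = a then (if g a = b then p ω else 0) else 0 := by
    intro a; unfold pr; split_ifs <;> simp
  rw [sum_congr rfl fun a _ => hswap a, sum_comm]
  exact sum_congr rfl fun ω _ => by simp

lemma pr_le_pr_comp [Fintype A] (hp : IsDist p) (X : Fin N → A) (g : A → B) (a : A) :
    pr p X a ≤ pr p (fun ω => g (X ω)) (g a) := by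
  rw [pr_comp X g]
  calc pr p X a = if g a = g a then pr p X a else 0 := by simp
    _ ≤ _ := single_le_sum (f := fun a' => if g a' = g a then pr p X a' else 0)
      (fun a' _ => by split_ifs <;> simp [pr_nonneg hp]) (mem_univ a)

lemma exists_pr_pos_of_pr_comp_pos [Fintype A] (hp : IsDist p) (X : Fin N → A) (g : A → B)
    {b : B} (hb : 0 < pr p (fun ω => g (X ω)) b) : ∃ a, g a = b ∧ 0 < pr p X a := by
  by_contra! h
  rw [pr_comp X g, sum_eq_zero fun a _ => ?_] at hb
  · exact hb.false
  · split_ifs with ha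
    · exact (h a ha).antisymm (pr_nonneg hp X a)
    · rfl

lemma sum_pr_comp_mul [Fintype A] [Fintype B] (X : Fin N → A) (g : A → B) (F : B → ℝ) :
    ∑ b, pr p (fun ω => g (X ω)) b * F b = ∑ a, pr p X a * F (g a) := by
  simp only [pr_comp, sum_mul, ite_mul, zero_mul]
  rw [sum_comm]
  exact sum_congr rfl fun a _ => by simp

lemma ent_mul_log_two [Fintype A] (X : Fin N → A) :
    ent p X * log 2 = -∑ a, pr p X a * log (pr p X a) := by
  simp only [ent, logb, neg_mul, sum_mul, mul_div_assoc']
  congr 1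
  exact sum_congr rfl fun a _ => div_mul_cancel₀ _ (by positivity)

lemma ent_eq_logb_of_pr_eq_zero_or [Fintype A] (hp : IsDist p) (X : Fin N → A) {c : ℝ}
    (h : ∀ a, pr p X a = 0 ∨ pr p X a = c⁻¹) : ent p X = logb 2 c := by
  have hterm : ∀ a, -(pr p X a * logb 2 (pr p X a)) = pr p X a * logb 2 c := by
    intro a
    rcases h a with h0 | h1
    · simp [h0]
    · rw [h1, logb_inv]; ring
  rw [ent, ← sum_neg_distrib, sum_congr rfl fun a _ => hterm a, ← sum_mul, sum_pr hp, one_mul]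

lemma exists_ent_eq_logb_of_pr_eq [Fintype A] (hp : IsDist p) (X : Fin N → A)
    (h : ∀ a a', 0 < pr p X a → 0 < pr p X a' → pr p X a = pr p X a') :
    ∃ m : ℕ, 0 < m ∧ ent p X = logb 2 m := by
  obtain ⟨a₀, ha₀⟩ := exists_pr_pos hp X
  set S := univ.filter fun a => 0 < pr p X a
  have hmass : (#S : ℝ) * pr p X a₀ = 1 := by
    rw [← sum_pr hp X, ← sum_filter_of_ne fun a _ ha => (pr_nonneg hp X a).lt_of_ne' ha,
      sum_congr rfl fun a ha => h a a₀ (mem_filter.1 ha).2 ha₀, sum_const, nsmul_eq_mul]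
  refine ⟨#S, card_pos.2 ⟨a₀, mem_filter.2 ⟨mem_univ a₀, ha₀⟩⟩,
    ent_eq_logb_of_pr_eq_zero_or hp X fun a => ?_⟩
  rcases (pr_nonneg hp X a).eq_or_lt with h0 | h0
  · exact Or.inl h0.symm
  · exact Or.inr ((h a a₀ h0 ha₀).trans (eq_inv_of_mul_eq_one_right hmass))

lemma ent_sub_ent_comp_mul_log_two [Fintype A] [Fintype B] (hp : IsDist p) (X : Fin N → A)
    (g : A → B) :
    (ent p X - ent p (fun ω => g (X ω))) * log 2
      = ∑ a, pr p X a * log (pr p (fun ω => g (X ω)) (g a) / pr p X a) := by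
  have hdiv : ∀ a, pr p X a * log (pr p (fun ω => g (X ω)) (g a) / pr p X a)
      = pr p X a * log (pr p (fun ω => g (X ω)) (g a)) - pr p X a * log (pr p X a) :=
    fun a => mul_log_div_eq_sub fun ha =>
      ((pr_nonneg hp X a).lt_of_ne' ha |>.trans_le (pr_le_pr_comp hp X g a)).ne'
  rw [sub_mul, ent_mul_log_two, ent_mul_log_two, sum_congr rfl fun a _ => hdiv a,
    sum_sub_distrib, ← sum_pr_comp_mul X g fun b => log (pr p (fun ω => g (X ω)) b)]
  ring

lemma pr_eq_pr_comp_of_ent_comp_eq [Fintype A] [Fintype B] (hp : IsDist p) (X : Fin N → A)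
    (g : A → B) (h : ent p (fun ω => g (X ω)) = ent p X) {a : A} (ha : 0 < pr p X a) :
    pr p X a = pr p (fun ω => g (X ω)) (g a) :=
  eq_of_le_of_sum_mul_log_div_eq_zero (pr_nonneg hp X) (pr_le_pr_comp hp X g)
    (by rw [← ent_sub_ent_comp_mul_log_two hp, h, sub_self, zero_mul]) ha

lemma ent_pair_sub_ent_sub_ent_mul_log_two [Fintype A] [Fintype B] (hp : IsDist p)
    (X : Fin N → A) (Y : Fin N → B) :
    (ent p (fun ω => (X ω, Y ω)) - ent p X - ent p Y) * log 2
      = ∑ v, pr p (fun ω => (X ω, Y ω)) v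
          * log (pr p X v.1 * pr p Y v.2 / pr p (fun ω => (X ω, Y ω)) v) := by
  set f := pr p (fun ω => (X ω, Y ω))
  have hdiv : ∀ v, f v * log (pr p X v.1 * pr p Y v.2 / f v)
      = f v * log (pr p X v.1) + f v * log (pr p Y v.2) - f v * log (f v) := by
    intro v
    rcases (show 0 ≤ f v from pr_nonneg hp _ v).eq_or_lt with h0 | h0
    · simp [← h0]
    · have hX := h0.trans_le (pr_le_pr_comp hp (fun ω => (X ω, Y ω)) Prod.fst v)
      have hY := h0.trans_le (pr_le_pr_comp hp (fun ω => (X ω, Y ω)) Prod.snd v)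
      rw [log_div (mul_pos hX hY).ne' h0.ne', log_mul hX.ne' hY.ne']
      ring
  have hX : ∑ v, f v * log (pr p X v.1) = ∑ a, pr p X a * log (pr p X a) :=
    (sum_pr_comp_mul (fun ω => (X ω, Y ω)) Prod.fst fun a => log (pr p X a)).symm
  have hY : ∑ v, f v * log (pr p Y v.2) = ∑ b, pr p Y b * log (pr p Y b) :=
    (sum_pr_comp_mul (fun ω => (X ω, Y ω)) Prod.snd fun b => log (pr p Y b)).symm
  rw [sub_mul, sub_mul, ent_mul_log_two, ent_mul_log_two, ent_mul_log_two,
    sum_congr rfl fun v _ => hdiv v, sum_sub_distrib, sum_add_distrib, hX, hY]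
  ring

lemma pr_pair_eq_mul_of_ent_pair_eq_add [Fintype A] [Fintype B] (hp : IsDist p)
    (X : Fin N → A) (Y : Fin N → B) (h : ent p (fun ω => (X ω, Y ω)) = ent p X + ent p Y)
    (v : A × B) : pr p (fun ω => (X ω, Y ω)) v = pr p X v.1 * pr p Y v.2 := by
  refine eq_of_sum_mul_log_div_eq_zero (pr_nonneg hp _)
    (fun v => mul_nonneg (pr_nonneg hp X v.1) (pr_nonneg hp Y v.2)) (fun v hv => ?_) ?_
    (by rw [← ent_pair_sub_ent_sub_ent_mul_log_two hp, h, add_sub_cancel_left, sub_self,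
      zero_mul]) v
  · rcases mul_eq_zero.1 hv with h0 | h0
    · exact (pr_le_pr_comp hp (fun ω => (X ω, Y ω)) Prod.fst v).trans_eq h0 |>.antisymm
        (pr_nonneg hp _ v)
    · exact (pr_le_pr_comp hp (fun ω => (X ω, Y ω)) Prod.snd v).trans_eq h0 |>.antisymm
        (pr_nonneg hp _ v)
  · rw [sum_pr hp, Fintype.sum_prod_type, ← Fintype.sum_mul_sum, sum_pr hp, sum_pr hp, one_mul]

lemma isDist_uniform {N : ℕ} (hN : 0 < N) : IsDist (fun _ : Fin N => (N : ℝ)⁻¹) :=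
  ⟨fun _ => by positivity, by simp [hN.ne']⟩

lemma pr_uniform_comp_equiv {N : ℕ} {α A : Type} [Fintype α] [DecidableEq A] (e : α ≃ Fin N)
    (Y : α → A) (a : A) :
    pr (fun _ => (N : ℝ)⁻¹) (fun ω => Y (e.symm ω)) a = #{u | Y u = a} / N := by
  rw [pr, ← e.sum_comp]
  simp [sum_ite, div_eq_mul_inv]

lemma ent_uniform_comp_equiv {N k : ℕ} {α A : Type} [Fintype α] [Fintype A] [DecidableEq A]
    (hN : 0 < N) (e : α ≃ Fin N) (Y : α → A)
    (hY : ∀ a, #{u | Y u = a} = 0 ∨ #{u | Y u = a} = k) :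
    ent (fun _ => (N : ℝ)⁻¹) (fun ω => Y (e.symm ω)) = logb 2 (N / k) := by
  refine ent_eq_logb_of_pr_eq_zero_or (isDist_uniform hN) _ fun a => ?_
  rw [pr_uniform_comp_equiv, inv_div]
  rcases hY a with h | h <;> simp [h]

section EntropicVectors

variable {N a₁ a₂ a₃ : ℕ} {p : Fin N → ℝ} {X₁ : Fin N → Fin a₁} {X₂ : Fin N → Fin a₂}
  {X₃ : Fin N → Fin a₃} {l : ℝ}

lemma entVec3_eq_smul_e123'_iff :
    entVec3 p X₁ X₂ X₃ = l • e123' ↔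
      ent p X₁ = l ∧ ent p X₂ = l ∧ ent p X₃ = l ∧
      ent p (fun ω => (X₁ ω, X₂ ω)) = 2 * l ∧ ent p (fun ω => (X₁ ω, X₃ ω)) = 2 * l ∧
      ent p (fun ω => (X₂ ω, X₃ ω)) = 2 * l ∧
      ent p (fun ω => (X₁ ω, X₂ ω, X₃ ω)) = 2 * l := by
  simp [funext_iff, Fin.forall_fin_succ, entVec3, e123', mul_comm]

lemma pr_eq_pr_of_entVec3_eq_smul_e123' (hp : IsDist p) (h : entVec3 p X₁ X₂ X₃ = l • e123')
    {a : Fin a₁} {b : Fin a₂} (ha : 0 < pr p X₁ a) (hb : 0 < pr p X₂ b) :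
    pr p X₁ a = pr p X₂ b := by
  obtain ⟨h₁, h₂, h₃, h₁₂, h₁₃, h₂₃, h₁₂₃⟩ := entVec3_eq_smul_e123'_iff.1 h
  have indep₁₂ := pr_pair_eq_mul_of_ent_pair_eq_add hp X₁ X₂ (by linarith)
  have indep₁₃ := pr_pair_eq_mul_of_ent_pair_eq_add hp X₁ X₃ (by linarith)
  have indep₂₃ := pr_pair_eq_mul_of_ent_pair_eq_add hp X₂ X₃ (by linarith)
  obtain ⟨⟨a', b', c⟩, hab, hpos⟩ := exists_pr_pos_of_pr_comp_pos hp
    (fun ω => (X₁ ω, X₂ ω, X₃ ω)) (fun t => (t.1, t.2.1)) (b := (a, b))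
    (by rw [indep₁₂]; exact mul_pos ha hb)
  obtain ⟨rfl, rfl⟩ := Prod.mk.inj hab
  have det₁₃ := pr_eq_pr_comp_of_ent_comp_eq hp (fun ω => (X₁ ω, X₂ ω, X₃ ω))
    (fun t => (t.1, t.2.2)) (h₁₃.trans h₁₂₃.symm) hpos
  have det₂₃ := pr_eq_pr_comp_of_ent_comp_eq hp (fun ω => (X₁ ω, X₂ ω, X₃ ω))
    (fun t => (t.2.1, t.2.2)) (h₂₃.trans h₁₂₃.symm) hpos
  have hc : 0 < pr p X₃ c :=
    hpos.trans_le (pr_le_pr_comp hp (fun ω => (X₁ ω, X₂ ω, X₃ ω)) (fun t => t.2.2) _)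
  refine mul_right_cancel₀ hc.ne' ?_
  rw [← indep₁₃ (a', c), ← indep₂₃ (b', c), ← det₁₃, ← det₂₃]

end EntropicVectors

lemma isEntropic_logb_smul_e123' {m : ℕ} (hm : 0 < m) : IsEntropic (logb 2 m • e123') := by
  have : NeZero m := ⟨hm.ne'⟩
  have hmm : 0 < m * m := Nat.mul_pos hm hm
  have hsingle : ∀ Y : Fin m × Fin m → Fin m, (∀ a, #{u | Y u = a} = m) →
      ent (fun _ => ((m * m : ℕ) : ℝ)⁻¹) (fun ω => Y (finProdFinEquiv.symm ω)) = logb 2 m := by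
    intro Y hY
    rw [ent_uniform_comp_equiv hmm _ Y fun a => Or.inr (hY a), Nat.cast_mul,
      mul_div_cancel_right₀ _ (Nat.cast_ne_zero.2 hm.ne')]
  have hinj : ∀ {A : Type} [Fintype A] [DecidableEq A] (Y : Fin m × Fin m → A),
      Function.Injective Y →
      ent (fun _ => ((m * m : ℕ) : ℝ)⁻¹) (fun ω => Y (finProdFinEquiv.symm ω)) = 2 * logb 2 m := by
    intro A _ _ Y hY
    have hm' : (m : ℝ) ≠ 0 := Nat.cast_ne_zero.2 hm.ne'
    rw [ent_uniform_comp_equiv hmm _ Y (k := 1) fun a => by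
      have := card_filter_eq_le_one hY a; omega, Nat.cast_mul, Nat.cast_one, div_one,
      logb_mul hm' hm', two_mul]
  refine ⟨m * m, m, m, m, fun _ => ((m * m : ℕ) : ℝ)⁻¹, fun ω => (finProdFinEquiv.symm ω).1,
    fun ω => (finProdFinEquiv.symm ω).2,
    fun ω => (finProdFinEquiv.symm ω).1 + (finProdFinEquiv.symm ω).2, isDist_uniform hmm,
    entVec3_eq_smul_e123'_iff.2 ⟨?_, ?_, ?_, ?_, ?_, ?_, ?_⟩⟩
  · exact hsingle Prod.fst fun a => by simp [card_filter_fst_eq]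
  · exact hsingle Prod.snd fun a => by simp [card_filter_snd_eq]
  · exact hsingle (fun u => u.1 + u.2) fun a => by simp [card_filter_add_eq]
  · exact hinj (fun u => (u.1, u.2)) fun u v h => by simpa using h
  · refine hinj (fun u => (u.1, u.1 + u.2)) fun u v h => ?_
    obtain ⟨h₁, h₂⟩ := Prod.mk.inj h
    exact Prod.ext h₁ (add_left_cancel (h₁ ▸ h₂))
  · refine hinj (fun u => (u.2, u.1 + u.2)) fun u v h => ?_
    obtain ⟨h₂, h₁₂⟩ := Prod.mk.inj h
    exact Prod.ext (add_right_cancel (h₂ ▸ h₁₂)) h₂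
  · refine hinj (fun u => (u.1, u.2, u.1 + u.2)) fun u v h => ?_
    simp only [Prod.mk.injEq] at h
    exact Prod.ext h.1 h.2.1

theorem stmt2_general (l : ℝ) :
    IsEntropic (l • e123') ↔ ∃ m : ℕ, 0 < m ∧ l = Real.logb 2 (m : ℝ) := by
  constructor
  · rintro ⟨N, a₁, a₂, a₃, p, X₁, X₂, X₃, hp, h⟩
    obtain ⟨b, hb⟩ := exists_pr_pos hp X₂
    obtain ⟨m, hm, hent⟩ := exists_ent_eq_logb_of_pr_eq hp X₁ fun a a' ha ha' =>
      (pr_eq_pr_of_entVec3_eq_smul_e123' hp h ha hb).trans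
        (pr_eq_pr_of_entVec3_eq_smul_e123' hp h ha' hb).symm
    exact ⟨m, hm, (entVec3_eq_smul_e123'_iff.1 h).1.symm.trans hent⟩
  · rintro ⟨m, hm, rfl⟩
    exact isEntropic_logb_smul_e123' hm

/-- For λ ≥ 0, the vector λ·e_{123'} is entropic iff λ = log₂ m for some positive integer m. -/
theorem stmt2 (l : ℝ) (hl : 0 ≤ l) :
    IsEntropic (l • e123') ↔ ∃ m : ℕ, 0 < m ∧ l = Real.logb 2 (m : ℝ) :=
  stmt2_general l
end Probability
end

section
/- For all λ_1, λ_2, λ_3 ≥ 0 and every positive integer m, the vector λ_1·e_1 + λ_2·e_2 + λ_3·e_3 + (log₂ m)·e_{123'} ∈ ℝ^7 is an entropy vector of three finite-alphabet random variables. -/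
/-! The entropy of a pair of independent variables is the sum of their entropies, so the entropy
vector of a product of two independent triples is the sum of their entropy vectors, and the
entropic vectors are closed under addition. It remains to realise each summand: `λ • e_i` by a
variable of entropy `λ` in slot `i` and constants elsewhere, and `(log₂ m) • e_{123'}` by
`X₁, X₂` independent and uniform on `ℤ/m` with `X₃ = X₁ + X₂`, any two of which determine the
third. -/

open Finset

open Function Real

section Entropy

variable {Ω Ω' A B : Type} [Fintype Ω] [Fintype Ω']

-- `pr`, `ent` and `IsDist` over an arbitrary finite sample space, which products and
-- reindexings of sample spaces require.
noncomputable def law (p : Ω → ℝ) [DecidableEq A] (X : Ω → A) (a : A) : ℝ :=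
  ∑ ω, if X ω = a then p ω else 0

noncomputable def entropy (p : Ω → ℝ) [Fintype A] [DecidableEq A] (X : Ω → A) : ℝ :=
  -∑ a, law p X a * logb 2 (law p X a)

def IsPmf (p : Ω → ℝ) : Prop :=
  (∀ ω, 0 ≤ p ω) ∧ ∑ ω, p ω = 1

variable [DecidableEq A] [DecidableEq B]

lemma sum_law [Fintype A] (p : Ω → ℝ) (X : Ω → A) : ∑ a, law p X a = ∑ ω, p ω := by
  simp only [law]
  rw [Finset.sum_comm]
  simp

lemma law_id [DecidableEq Ω] (p : Ω → ℝ) : law p id = p := by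
  ext a
  simp [law]

lemma entropy_eq_sum_negMulLog [Fintype A] (p : Ω → ℝ) (X : Ω → A) :
    entropy p X = (∑ a, negMulLog (law p X a)) / log 2 := by
  simp only [entropy, logb, negMulLog, Finset.sum_div, ← Finset.sum_neg_distrib]
  exact Finset.sum_congr rfl fun _ _ => by ring

lemma entropy_comp_of_injective [Fintype A] [Fintype B] (p : Ω → ℝ) {f : A → B}
    (hf : Injective f) (X : Ω → A) : entropy p (fun ω => f (X ω)) = entropy p X := by
  have hlaw : ∀ a, law p (fun ω => f (X ω)) (f a) = law p X a := fun a => by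
    simp [law, hf.eq_iff]
  have hzero : ∀ b ∉ Finset.univ.image f, law p (fun ω => f (X ω)) b = 0 := fun b hb => by
    simp only [Finset.mem_image, Finset.mem_univ, true_and, not_exists] at hb
    simp [law, hb]
  rw [entropy_eq_sum_negMulLog, entropy_eq_sum_negMulLog,
    ← Finset.sum_subset (Finset.subset_univ _) fun b _ hb => by simp [hzero b hb],
    Finset.sum_image (s := Finset.univ) fun a _ a' _ h => hf h]
  simp only [hlaw]

lemma entropy_comp_equiv [Fintype A] (e : Ω' ≃ Ω) (p : Ω → ℝ) (X : Ω → A) :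
    entropy (fun ω' => p (e ω')) (fun ω' => X (e ω')) = entropy p X := by
  have hlaw : law (fun ω' => p (e ω')) (fun ω' => X (e ω')) = law p X := by
    ext a
    exact e.sum_comp fun ω => if X ω = a then p ω else 0
  simp only [entropy, hlaw]

lemma entropy_of_subsingleton [Fintype A] [Subsingleton A] {p : Ω → ℝ} (hp : ∑ ω, p ω = 1)
    (X : Ω → A) : entropy p X = 0 := by
  have hlaw : ∀ a, law p X a = 1 := fun a => by simp [law, Subsingleton.elim _ a, hp]
  simp [entropy, hlaw]

lemma entropy_const [Fintype A] {p : Ω → ℝ} (hp : ∑ ω, p ω = 1) (a : A) :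
    entropy p (fun _ => a) = 0 :=
  (entropy_comp_of_injective p (f := fun (_ : Unit) => a) (fun _ _ _ => rfl) fun _ => ()).trans
    (entropy_of_subsingleton hp _)

@[simp]
lemma entropy_pair_const_right [Fintype A] [Fintype B] (p : Ω → ℝ) (X : Ω → A) (b : B) :
    entropy p (fun ω => (X ω, b)) = entropy p X :=
  entropy_comp_of_injective p (f := fun a => (a, b)) (fun _ _ h => congrArg Prod.fst h) X

@[simp]
lemma entropy_pair_const_left [Fintype A] [Fintype B] (p : Ω → ℝ) (X : Ω → A) (b : B) :
    entropy p (fun ω => (b, X ω)) = entropy p X :=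
  entropy_comp_of_injective p (f := fun a => (b, a)) (fun _ _ h => congrArg Prod.snd h) X

lemma law_prod (p : Ω → ℝ) (q : Ω' → ℝ) (X : Ω → A) (Y : Ω' → B) (a : A) (b : B) :
    law (fun ω : Ω × Ω' => p ω.1 * q ω.2) (fun ω => (X ω.1, Y ω.2)) (a, b)
      = law p X a * law q Y b := by
  simp only [law, Fintype.sum_prod_type, Finset.sum_mul_sum, Prod.mk.injEq, ite_and]
  refine Finset.sum_congr rfl fun ω _ => Finset.sum_congr rfl fun ω' _ => ?_
  split_ifs <;> simp

lemma entropy_prod [Fintype A] [Fintype B] {p : Ω → ℝ} {q : Ω' → ℝ}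
    (hp : ∑ ω, p ω = 1) (hq : ∑ ω, q ω = 1) (X : Ω → A) (Y : Ω' → B) :
    entropy (fun ω : Ω × Ω' => p ω.1 * q ω.2) (fun ω => (X ω.1, Y ω.2))
      = entropy p X + entropy q Y := by
  simp only [entropy_eq_sum_negMulLog, Fintype.sum_prod_type, law_prod, negMulLog_mul,
    Finset.sum_add_distrib, ← Finset.mul_sum, ← Finset.sum_mul, sum_law, hp, hq]
  ring

lemma IsPmf.prod {p : Ω → ℝ} {q : Ω' → ℝ}
    (hp : IsPmf p) (hq : IsPmf q) : IsPmf (fun ω : Ω × Ω' => p ω.1 * q ω.2) :=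
  ⟨fun ω => mul_nonneg (hp.1 _) (hq.1 _), by
    rw [Fintype.sum_prod_type, ← Finset.sum_mul_sum, hp.2, hq.2, mul_one]⟩

end Entropy

section EntropyVector

variable {Ω A₁ A₂ A₃ : Type} [Fintype Ω]
  [Fintype A₁] [Fintype A₂] [Fintype A₃] [DecidableEq A₁] [DecidableEq A₂] [DecidableEq A₃]

noncomputable def entVec (p : Ω → ℝ) (X₁ : Ω → A₁) (X₂ : Ω → A₂) (X₃ : Ω → A₃) : Fin 7 → ℝ :=
  ![entropy p X₁, entropy p X₂, entropy p X₃,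
    entropy p (fun ω => (X₁ ω, X₂ ω)),
    entropy p (fun ω => (X₁ ω, X₃ ω)),
    entropy p (fun ω => (X₂ ω, X₃ ω)),
    entropy p (fun ω => (X₁ ω, X₂ ω, X₃ ω))]

lemma entVec3_eq_entVec {N a₁ a₂ a₃ : ℕ} (p : Fin N → ℝ)
    (X₁ : Fin N → Fin a₁) (X₂ : Fin N → Fin a₂) (X₃ : Fin N → Fin a₃) :
    entVec3 p X₁ X₂ X₃ = entVec p X₁ X₂ X₃ := rfl

lemma isEntropic_entVec {p : Ω → ℝ} (hp : IsPmf p)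
    (X₁ : Ω → A₁) (X₂ : Ω → A₂) (X₃ : Ω → A₃) : IsEntropic (entVec p X₁ X₂ X₃) := by
  let e := (Fintype.equivFin Ω).symm
  let e₁ := Fintype.equivFin A₁
  let e₂ := Fintype.equivFin A₂
  let e₃ := Fintype.equivFin A₃
  have hsum : ∑ i, p (e i) = 1 := (e.sum_comp p).trans hp.2
  refine ⟨_, _, _, _, fun i => p (e i), fun i => e₁ (X₁ (e i)), fun i => e₂ (X₂ (e i)),
    fun i => e₃ (X₃ (e i)), ⟨fun i => hp.1 _, hsum⟩, ?_⟩
  have reindex : ∀ {C D : Type} [Fintype C] [DecidableEq C] [Fintype D] [DecidableEq D]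
      (f : C → D), Injective f → ∀ X : Ω → C,
      entropy (fun i => p (e i)) (fun i => f (X (e i))) = entropy p X := fun f hf X =>
    (entropy_comp_of_injective _ hf _).trans (entropy_comp_equiv e p X)
  simp only [entVec3_eq_entVec, entVec, Matrix.vecCons_inj, and_true]
  exact ⟨reindex _ e₁.injective X₁, reindex _ e₂.injective X₂, reindex _ e₃.injective X₃,
    reindex (Prod.map e₁ e₂) (e₁.injective.prodMap e₂.injective) (fun ω => (X₁ ω, X₂ ω)),
    reindex (Prod.map e₁ e₃) (e₁.injective.prodMap e₃.injective) (fun ω => (X₁ ω, X₃ ω)),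
    reindex (Prod.map e₂ e₃) (e₂.injective.prodMap e₃.injective) (fun ω => (X₂ ω, X₃ ω)),
    reindex (Prod.map e₁ (Prod.map e₂ e₃))
      (e₁.injective.prodMap (e₂.injective.prodMap e₃.injective)) (fun ω => (X₁ ω, X₂ ω, X₃ ω))⟩

end EntropyVector

section Product

variable {Ω Ω' A₁ A₂ A₃ B₁ B₂ B₃ : Type} [Fintype Ω] [Fintype Ω']
  [Fintype A₁] [Fintype A₂] [Fintype A₃] [DecidableEq A₁] [DecidableEq A₂] [DecidableEq A₃]
  [Fintype B₁] [Fintype B₂] [Fintype B₃] [DecidableEq B₁] [DecidableEq B₂] [DecidableEq B₃]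

lemma entropy_prod_comp {A B C : Type} [Fintype A] [Fintype B] [Fintype C] [DecidableEq A]
    [DecidableEq B] [DecidableEq C] {p : Ω → ℝ} {q : Ω' → ℝ} (hp : ∑ ω, p ω = 1)
    (hq : ∑ ω, q ω = 1) {f : A × B → C} (hf : Injective f) (X : Ω → A) (Y : Ω' → B) :
    entropy (fun ω : Ω × Ω' => p ω.1 * q ω.2) (fun ω => f (X ω.1, Y ω.2))
      = entropy p X + entropy q Y :=
  (entropy_comp_of_injective _ hf _).trans (entropy_prod hp hq X Y)

lemma entVec_prod {p : Ω → ℝ} {q : Ω' → ℝ} (hp : ∑ ω, p ω = 1) (hq : ∑ ω, q ω = 1)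
    (X₁ : Ω → A₁) (X₂ : Ω → A₂) (X₃ : Ω → A₃) (Y₁ : Ω' → B₁) (Y₂ : Ω' → B₂) (Y₃ : Ω' → B₃) :
    entVec (fun ω : Ω × Ω' => p ω.1 * q ω.2) (fun ω => (X₁ ω.1, Y₁ ω.2))
      (fun ω => (X₂ ω.1, Y₂ ω.2)) (fun ω => (X₃ ω.1, Y₃ ω.2))
      = entVec p X₁ X₂ X₃ + entVec q Y₁ Y₂ Y₃ := by
  have pair : ∀ {A A' B B' : Type} [Fintype A] [Fintype A'] [Fintype B] [Fintype B']
      [DecidableEq A] [DecidableEq A'] [DecidableEq B] [DecidableEq B']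
      (X : Ω → A) (X' : Ω → A') (Y : Ω' → B) (Y' : Ω' → B'),
      entropy (fun ω : Ω × Ω' => p ω.1 * q ω.2) (fun ω => ((X ω.1, Y ω.2), (X' ω.1, Y' ω.2)))
        = entropy p (fun ω => (X ω, X' ω)) + entropy q (fun ω => (Y ω, Y' ω)) :=
    fun X X' Y Y' => entropy_prod_comp hp hq (Equiv.prodProdProdComm _ _ _ _).injective
      (fun ω => (X ω, X' ω)) (fun ω => (Y ω, Y' ω))
  have triple := entropy_prod_comp hp hq
    ((Equiv.prodCongr (Equiv.refl _) (Equiv.prodProdProdComm _ _ _ _)).injective.comp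
      (Equiv.prodProdProdComm _ _ _ _).injective)
    (fun ω => (X₁ ω, X₂ ω, X₃ ω)) (fun ω => (Y₁ ω, Y₂ ω, Y₃ ω))
  simp only [entVec, Matrix.cons_add_cons, Matrix.empty_add_empty, Matrix.vecCons_inj, and_true]
  exact ⟨entropy_prod hp hq X₁ Y₁, entropy_prod hp hq X₂ Y₂, entropy_prod hp hq X₃ Y₃,
    pair X₁ X₂ Y₁ Y₂, pair X₁ X₃ Y₁ Y₃, pair X₂ X₃ Y₂ Y₃, triple⟩

end Product

lemma IsEntropic.add {h h' : Fin 7 → ℝ} (H : IsEntropic h) (H' : IsEntropic h') :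
    IsEntropic (h + h') := by
  obtain ⟨N, a₁, a₂, a₃, p, X₁, X₂, X₃, hp, rfl⟩ := H
  obtain ⟨M, b₁, b₂, b₃, q, Y₁, Y₂, Y₃, hq, rfl⟩ := H'
  rw [entVec3_eq_entVec, entVec3_eq_entVec, ← entVec_prod hp.2 hq.2]
  exact isEntropic_entVec (IsPmf.prod hp hq) _ _ _

section Realization

variable {Ω : Type} [Fintype Ω]

lemma isPmf_uniform [Nonempty Ω] : IsPmf (fun _ : Ω => (Fintype.card Ω : ℝ)⁻¹) :=
  ⟨fun _ => by positivity, by simp⟩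

variable [DecidableEq Ω]

lemma entropy_uniform : entropy (fun _ : Ω => (Fintype.card Ω : ℝ)⁻¹) id
    = logb 2 (Fintype.card Ω) := by
  rw [entropy_eq_sum_negMulLog, law_id, Finset.sum_const, Finset.card_univ, nsmul_eq_mul,
    negMulLog, log_inv, logb]
  rcases eq_or_ne (Fintype.card Ω : ℝ) 0 with hc | hc
  · simp [hc]
  · field_simp

lemma exists_isPmf_entropy_id_eq [Nonempty Ω] {l : ℝ} (h0 : 0 ≤ l)
    (hl : l ≤ logb 2 (Fintype.card Ω)) : ∃ p : Ω → ℝ, IsPmf p ∧ entropy p id = l := by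
  obtain ⟨ω₀⟩ := ‹Nonempty Ω›
  have hc : (0 : ℝ) < Fintype.card Ω := by simp [Fintype.card_pos]
  -- interpolate between a point mass (entropy 0) and the uniform distribution
  let P : ℝ → Ω → ℝ := fun t ω => (1 - t) * (if ω = ω₀ then 1 else 0) + t * (Fintype.card Ω : ℝ)⁻¹
  have hP : ∀ t ∈ Set.Icc (0 : ℝ) 1, IsPmf (P t) := fun t ht =>
    ⟨fun ω => by have := ht.1; have := ht.2; positivity,
     by
      simp only [P, mul_ite, mul_one, mul_zero, sum_add_distrib, sum_ite_eq', mem_univ,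
        if_true, sum_const, card_univ, nsmul_eq_mul]
      field_simp
      ring⟩
  have hF : Continuous fun t => entropy (P t) id := by
    simp only [entropy_eq_sum_negMulLog, law_id, P]
    fun_prop
  have hF0 : entropy (P 0) id = 0 := by
    simp only [entropy_eq_sum_negMulLog, law_id, P]
    simp [apply_ite negMulLog]
  have hF1 : entropy (P 1) id = logb 2 (Fintype.card Ω) := by
    simpa [P] using entropy_uniform (Ω := Ω)
  obtain ⟨t, ht, hFt⟩ := intermediate_value_Icc zero_le_one hF.continuousOn
    (show l ∈ Set.Icc _ _ by rw [hF0, hF1]; exact ⟨h0, hl⟩)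
  exact ⟨P t, hP t ht, hFt⟩

end Realization

lemma exists_fin_isPmf_entropy_id_eq {l : ℝ} (hl : 0 ≤ l) :
    ∃ (n : ℕ) (p : Fin n → ℝ), IsPmf p ∧ entropy p (id : Fin n → Fin n) = l := by
  refine ⟨2 ^ ⌈l⌉₊, exists_isPmf_entropy_id_eq hl ?_⟩
  rw [Fintype.card_fin, Nat.cast_pow, Nat.cast_ofNat, logb_pow, logb_self_eq_one one_lt_two,
    mul_one]
  exact Nat.le_ceil l

section SingleVariable

variable {Ω A : Type} [Fintype Ω] [Fintype A] [DecidableEq A] {p : Ω → ℝ}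

lemma isEntropic_entropy_smul_e1 (hp : IsPmf p) (X : Ω → A) : IsEntropic (entropy p X • e1) := by
  convert isEntropic_entVec hp X (fun _ => ()) (fun _ => ()) using 1
  ext i
  fin_cases i <;> simp [entVec, e1, entropy_const hp.2]

lemma isEntropic_entropy_smul_e2 (hp : IsPmf p) (X : Ω → A) : IsEntropic (entropy p X • e2) := by
  convert isEntropic_entVec hp (fun _ => ()) X (fun _ => ()) using 1
  ext i
  fin_cases i <;> simp [entVec, e2, entropy_const hp.2]

lemma isEntropic_entropy_smul_e3 (hp : IsPmf p) (X : Ω → A) : IsEntropic (entropy p X • e3) := by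
  convert isEntropic_entVec hp (fun _ => ()) (fun _ => ()) X using 1
  ext i
  fin_cases i <;> simp [entVec, e3, entropy_const hp.2]

end SingleVariable

lemma isEntropic_logb_card_smul_e123' (G : Type) [AddCommGroup G] [Fintype G] [DecidableEq G] :
    IsEntropic (logb 2 (Fintype.card G) • e123') := by
  set L := logb 2 (Fintype.card G)
  set u : G → ℝ := fun _ => (Fintype.card G : ℝ)⁻¹
  have hu : IsPmf u := isPmf_uniform
  have hU : entropy u id = L := entropy_uniform
  let P : G × G → ℝ := fun ω => u ω.1 * u ω.2
  have hX₁ : entropy P (fun ω => ω.1) = L := by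
    simpa [hU, entropy_const hu.2] using entropy_prod hu.2 hu.2 id (fun _ => ())
  have hX₂ : entropy P (fun ω => ω.2) = L := by
    simpa [hU, entropy_const hu.2] using entropy_prod hu.2 hu.2 (fun _ => ()) id
  have hX₃ : entropy P (fun ω => ω.1 + ω.2) = L := by
    rw [← entropy_comp_equiv (Equiv.prodShear (Equiv.refl G) Equiv.subRight)]
    simpa [P, u] using hX₂
  have hpair : ∀ {C : Type} [Fintype C] [DecidableEq C] {f : G × G → C}, Injective f →
      entropy P (fun ω => f (ω.1, ω.2)) = L * 2 :=
    fun hf => (entropy_prod_comp hu.2 hu.2 hf id id).trans (by rw [hU]; ring)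
  convert isEntropic_entVec (hu.prod hu) (fun ω => ω.1) (fun ω => ω.2) (fun ω => ω.1 + ω.2)
    using 1
  simp only [entVec, e123', Matrix.smul_cons, smul_eq_mul, mul_one, Matrix.smul_empty,
    Matrix.vecCons_inj, and_true]
  exact ⟨hX₁.symm, hX₂.symm, hX₃.symm, (hpair injective_id).symm,
    (hpair (Equiv.prodShear (Equiv.refl G) Equiv.addLeft).injective).symm,
    (hpair (f := fun ω => (ω.2, ω.1 + ω.2)) fun x y h => by
      obtain ⟨h₂, h₁₂⟩ := Prod.mk.inj h
      rw [h₂] at h₁₂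
      exact Prod.ext (add_right_cancel h₁₂) h₂).symm,
    (hpair (f := fun ω => (ω.1, ω.2, ω.1 + ω.2)) fun x y h =>
      Prod.ext (Prod.mk.inj h).1 (Prod.mk.inj (Prod.mk.inj h).2).1).symm⟩

/-- For λ₁, λ₂, λ₃ ≥ 0 and m a positive integer,
λ₁·e₁ + λ₂·e₂ + λ₃·e₃ + (log₂ m)·e₁₂₃' is an entropy vector. -/
theorem stmt5 (l1 l2 l3 : ℝ) (h1 : 0 ≤ l1) (h2 : 0 ≤ l2) (h3 : 0 ≤ l3)
    (m : ℕ) (hm : 0 < m) :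
    IsEntropic (l1 • e1 + l2 • e2 + l3 • e3 + Real.logb 2 (m : ℝ) • e123') := by
  obtain ⟨_, p₁, hp₁, rfl⟩ := exists_fin_isPmf_entropy_id_eq h1
  obtain ⟨_, p₂, hp₂, rfl⟩ := exists_fin_isPmf_entropy_id_eq h2
  obtain ⟨_, p₃, hp₃, rfl⟩ := exists_fin_isPmf_entropy_id_eq h3
  have : NeZero m := ⟨hm.ne'⟩
  have h123 := isEntropic_logb_card_smul_e123' (Fin m)
  rw [Fintype.card_fin] at h123
  exact (((isEntropic_entropy_smul_e1 hp₁ id).add (isEntropic_entropy_smul_e2 hp₂ id)).add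
    (isEntropic_entropy_smul_e3 hp₃ id)).add h123
end

section
/- There exists a quasi-uniform random vector (X_1, X_2, X_3), with each X_i taking values in a 4-element alphabet, such that each X_i is uniformly distributed on its 4-element alphabet, each pair (X_i, X_j) with i ≠ j is uniformly distributed on all 16 pairs of values, and the joint distribution of (X_1, X_2, X_3) is uniform on a support of exactly 48 triples; consequently its entropy vector equals f = (2, 2, 2, 4, 4, 4, log₂ 48). -/
open Finset

/-- The random variable `X` is quasi-uniform: there is a constant `q ∈ (0,1]` such that
every point probability is either `0` or `q`. -/
def QU {N : ℕ} (p : Fin N → ℝ) {A : Type} [DecidableEq A] (X : Fin N → A) : Prop :=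
  ∃ q : ℝ, 0 < q ∧ q ≤ 1 ∧ ∀ a, pr p X a = 0 ∨ pr p X a = q

/-- The random vector (X₁,X₂,X₃) is quasi-uniform: every one of the seven nonempty
sub-vectors is quasi-uniform. -/
def QuasiUniform3 {N a₁ a₂ a₃ : ℕ} (p : Fin N → ℝ)
    (X₁ : Fin N → Fin a₁) (X₂ : Fin N → Fin a₂) (X₃ : Fin N → Fin a₃) : Prop :=
  QU p X₁ ∧ QU p X₂ ∧ QU p X₃ ∧
  QU p (fun ω => (X₁ ω, X₂ ω)) ∧ QU p (fun ω => (X₁ ω, X₃ ω)) ∧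
  QU p (fun ω => (X₂ ω, X₃ ω)) ∧ QU p (fun ω => (X₁ ω, X₂ ω, X₃ ω))

/-! Let `G` be a finite abelian group (here `ℤ/4ℤ`, realised as `Fin 4`) and let `(X₁, X₂, X₃)` be
uniform on the triples with `X₁ + X₂ + X₃ ≠ 0`. Fixing any two coordinates excludes exactly one
value of the third, so every pair is uniform on `G²`, hence every coordinate is uniform on `G`,
and the support has `|G|² (|G| - 1) = 48` elements. A variable uniform on a set `T` is
quasi-uniform with entropy `log₂ |T|`. -/

section Law

variable {N : ℕ} {A B : Type} [DecidableEq A] [DecidableEq B]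

def IsUniformOn (p : Fin N → ℝ) (X : Fin N → A) (T : Finset A) : Prop :=
  ∀ a, pr p X a = if a ∈ T then (#T : ℝ)⁻¹ else 0

variable {p : Fin N → ℝ} {X : Fin N → A} {T : Finset A}

theorem IsUniformOn.qu (h : IsUniformOn p X T) (hT : T.Nonempty) : QU p X := by
  have hcard : (1 : ℝ) ≤ #T := by exact_mod_cast hT.card_pos
  refine ⟨(#T : ℝ)⁻¹, by positivity, inv_le_one_of_one_le₀ hcard, fun a => ?_⟩
  rw [h a]
  split_ifs <;> simp

theorem IsUniformOn.ncard_setOf_pr_ne_zero (h : IsUniformOn p X T) :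
    {a | pr p X a ≠ 0}.ncard = #T := by
  have : {a | pr p X a ≠ 0} = ↑T := by
    ext a
    simp only [Set.mem_ofPred_eq, h a, mem_coe]
    split_ifs with ha
    · simpa [ha] using ne_empty_of_mem ha
    · simpa
  rw [this, Set.ncard_coe_finset]

theorem IsUniformOn.ent_eq [Fintype A] (h : IsUniformOn p X T) : ent p X = Real.logb 2 #T := by
  rcases T.eq_empty_or_nonempty with rfl | hT
  · simp [ent, h _]
  have hcard : (#T : ℝ) ≠ 0 := by exact_mod_cast hT.card_pos.ne'
  have hterm : ∀ a, pr p X a * Real.logb 2 (pr p X a)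
      = if a ∈ T then -((#T : ℝ)⁻¹ * Real.logb 2 #T) else 0 := by
    intro a
    rw [h a]
    split_ifs
    · rw [Real.logb_inv, mul_neg]
    · simp
  rw [ent, sum_congr rfl fun a _ => hterm a, sum_ite_mem, univ_inter, sum_const, nsmul_eq_mul]
  field_simp

theorem isUniformOn_univ_iff [Fintype A] :
    IsUniformOn p X univ ↔ ∀ a, pr p X a = (Fintype.card A : ℝ)⁻¹ := by
  simp [IsUniformOn]

theorem pr_eq_sum_pr_pair_fst [Fintype B] (X : Fin N → A) (Y : Fin N → B) (a : A) :
    pr p X a = ∑ b, pr p (fun ω => (X ω, Y ω)) (a, b) := by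
  unfold pr
  rw [sum_comm]
  refine sum_congr rfl fun ω _ => ?_
  simp [Prod.ext_iff, ite_and, eq_comm]

theorem pr_eq_sum_pr_pair_snd [Fintype A] (X : Fin N → A) (Y : Fin N → B) (b : B) :
    pr p Y b = ∑ a, pr p (fun ω => (X ω, Y ω)) (a, b) := by
  unfold pr
  rw [sum_comm]
  refine sum_congr rfl fun ω _ => ?_
  simp [Prod.ext_iff, ite_and, eq_comm]

theorem isUniformOn_univ_of_pair_fst [Fintype A] [Fintype B] [Nonempty B] {Y : Fin N → B}
    (h : IsUniformOn p (fun ω => (X ω, Y ω)) univ) : IsUniformOn p X univ := by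
  rw [isUniformOn_univ_iff] at h ⊢
  intro a
  have hB : (Fintype.card B : ℝ) ≠ 0 := by exact_mod_cast Fintype.card_ne_zero
  simp only [pr_eq_sum_pr_pair_fst X Y a, h, sum_const, card_univ, Fintype.card_prod, nsmul_eq_mul,
    Nat.cast_mul]
  field_simp

theorem isUniformOn_univ_of_pair_snd [Fintype A] [Fintype B] [Nonempty A] {Y : Fin N → B}
    (h : IsUniformOn p (fun ω => (X ω, Y ω)) univ) : IsUniformOn p Y univ := by
  rw [isUniformOn_univ_iff] at h ⊢
  intro b
  have hA : (Fintype.card A : ℝ) ≠ 0 := by exact_mod_cast Fintype.card_ne_zero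
  simp only [pr_eq_sum_pr_pair_snd X Y b, h, sum_const, card_univ, Fintype.card_prod, nsmul_eq_mul,
    Nat.cast_mul]
  field_simp

end Law

section UniformPmf

variable {N : ℕ} {A β : Type} [DecidableEq A] [Fintype β] [DecidableEq β]

noncomputable def uniformPmf (e : Fin N ≃ β) (S : Finset β) : Fin N → ℝ :=
  fun ω => if e ω ∈ S then (#S : ℝ)⁻¹ else 0

theorem isDist_uniformPmf (e : Fin N ≃ β) {S : Finset β} (hS : S.Nonempty) :
    IsDist (uniformPmf e S) := by
  refine ⟨fun ω => by unfold uniformPmf; split_ifs <;> positivity, ?_⟩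
  have hcard : (#S : ℝ) ≠ 0 := by exact_mod_cast hS.card_pos.ne'
  unfold uniformPmf
  rw [e.sum_comp (fun x => if x ∈ S then (#S : ℝ)⁻¹ else 0), ← sum_filter]
  simp [hcard]

theorem pr_uniformPmf (e : Fin N ≃ β) (S : Finset β) (f : β → A) (a : A) :
    pr (uniformPmf e S) (fun ω => f (e ω)) a = #{x ∈ S | f x = a} / #S := by
  unfold pr uniformPmf
  rw [e.sum_comp (fun x => if f x = a then (if x ∈ S then (#S : ℝ)⁻¹ else 0) else 0)]
  simp only [← ite_and, ← sum_filter, sum_const, nsmul_eq_mul, div_eq_mul_inv]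
  congr 3
  ext x
  simp [and_comm]

theorem isUniformOn_uniformPmf (e : Fin N ≃ β) (S : Finset β) :
    IsUniformOn (uniformPmf e S) e S := by
  intro x
  change pr _ (fun ω => id (e ω)) x = _
  rw [pr_uniformPmf e S id x]
  simp only [id, filter_eq']
  split_ifs <;> simp

end UniformPmf

section NonzeroSumTriples

variable (G : Type*) [AddCommGroup G] [Fintype G] [DecidableEq G]

def nonzeroSumTriples : Finset (G × G × G) := {x | x.1 + x.2.1 + x.2.2 ≠ 0}

variable {G}

theorem card_filter_nonzeroSumTriples_proj₁₂ (a b : G) :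
    #{x ∈ nonzeroSumTriples G | (x.1, x.2.1) = (a, b)} = Fintype.card G - 1 := by
  rw [← card_univ, ← card_erase_of_mem (mem_univ (-(a + b)))]
  refine card_nbij' (fun x => x.2.2) (fun c => (a, b, c)) ?_ ?_ ?_ ?_ <;>
    intro x hx <;> simp [nonzeroSumTriples] at hx ⊢ <;> grind

theorem card_filter_nonzeroSumTriples_proj₁₃ (a c : G) :
    #{x ∈ nonzeroSumTriples G | (x.1, x.2.2) = (a, c)} = Fintype.card G - 1 := by
  rw [← card_univ, ← card_erase_of_mem (mem_univ (-(a + c)))]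
  refine card_nbij' (fun x => x.2.1) (fun b => (a, b, c)) ?_ ?_ ?_ ?_ <;>
    intro x hx <;> simp [nonzeroSumTriples] at hx ⊢ <;> grind

theorem card_filter_nonzeroSumTriples_proj₂₃ (b c : G) :
    #{x ∈ nonzeroSumTriples G | (x.2.1, x.2.2) = (b, c)} = Fintype.card G - 1 := by
  rw [← card_univ, ← card_erase_of_mem (mem_univ (-(b + c)))]
  refine card_nbij' (fun x => x.1) (fun a => (a, b, c)) ?_ ?_ ?_ ?_ <;>
    intro x hx <;> simp [nonzeroSumTriples] at hx ⊢ <;> grind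

theorem card_nonzeroSumTriples :
    #(nonzeroSumTriples G) = Fintype.card G ^ 2 * (Fintype.card G - 1) := by
  rw [card_eq_sum_card_fiberwise (f := fun x => (x.1, x.2.1)) (t := univ) (fun _ _ => mem_univ _)]
  simp [card_filter_nonzeroSumTriples_proj₁₂, sq]

end NonzeroSumTriples

section Construction

variable {N : ℕ} {G : Type} [AddCommGroup G] [Fintype G] [DecidableEq G] [Nontrivial G]

theorem isUniformOn_univ_pair_nonzeroSumTriples (e : Fin N ≃ G × G × G)
    (f : G × G × G → G × G) (hf : ∀ y, #{x ∈ nonzeroSumTriples G | f x = y} = Fintype.card G - 1) :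
    IsUniformOn (uniformPmf e (nonzeroSumTriples G)) (fun ω => f (e ω)) univ := by
  rw [isUniformOn_univ_iff]
  intro y
  have hG : (1 : ℝ) < Fintype.card G := by exact_mod_cast Fintype.one_lt_card
  rw [pr_uniformPmf, hf, card_nonzeroSumTriples, Fintype.card_prod]
  push_cast [Nat.one_le_of_lt Fintype.one_lt_card]
  field_simp [(sub_pos.2 hG).ne']

theorem isUniformOn_nonzeroSumTriples (e : Fin N ≃ G × G × G) :
    let p := uniformPmf e (nonzeroSumTriples G)
    IsUniformOn p (fun ω => (e ω).1) univ ∧ IsUniformOn p (fun ω => (e ω).2.1) univ ∧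
      IsUniformOn p (fun ω => (e ω).2.2) univ ∧
      IsUniformOn p (fun ω => ((e ω).1, (e ω).2.1)) univ ∧
      IsUniformOn p (fun ω => ((e ω).1, (e ω).2.2)) univ ∧
      IsUniformOn p (fun ω => ((e ω).2.1, (e ω).2.2)) univ ∧
      IsUniformOn p (fun ω => ((e ω).1, (e ω).2.1, (e ω).2.2)) (nonzeroSumTriples G) := by
  have h12 := isUniformOn_univ_pair_nonzeroSumTriples e (fun x => (x.1, x.2.1))
    fun y => card_filter_nonzeroSumTriples_proj₁₂ y.1 y.2
  have h13 := isUniformOn_univ_pair_nonzeroSumTriples e (fun x => (x.1, x.2.2))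
    fun y => card_filter_nonzeroSumTriples_proj₁₃ y.1 y.2
  have h23 := isUniformOn_univ_pair_nonzeroSumTriples e (fun x => (x.2.1, x.2.2))
    fun y => card_filter_nonzeroSumTriples_proj₂₃ y.1 y.2
  exact ⟨isUniformOn_univ_of_pair_fst h12, isUniformOn_univ_of_pair_snd h12,
    isUniformOn_univ_of_pair_snd h13, h12, h13, h23, isUniformOn_uniformPmf e _⟩

end Construction

/-- There is a quasi-uniform triple on 4-element alphabets, with uniform singletons,
uniform pairs on all 16 values, and joint distribution uniform on a support of exactly
48 triples; its entropy vector is (2,2,2,4,4,4, log₂ 48). -/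
theorem stmt6 :
    ∃ (N : ℕ) (p : Fin N → ℝ) (X₁ X₂ X₃ : Fin N → Fin 4),
      IsDist p ∧ QuasiUniform3 p X₁ X₂ X₃ ∧
      (∀ a, pr p X₁ a = 1/4) ∧ (∀ a, pr p X₂ a = 1/4) ∧ (∀ a, pr p X₃ a = 1/4) ∧
      (∀ x, pr p (fun ω => (X₁ ω, X₂ ω)) x = 1/16) ∧
      (∀ x, pr p (fun ω => (X₁ ω, X₃ ω)) x = 1/16) ∧
      (∀ x, pr p (fun ω => (X₂ ω, X₃ ω)) x = 1/16) ∧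
      {x | pr p (fun ω => (X₁ ω, X₂ ω, X₃ ω)) x ≠ 0}.ncard = 48 ∧
      (∀ x, pr p (fun ω => (X₁ ω, X₂ ω, X₃ ω)) x = 0 ∨
            pr p (fun ω => (X₁ ω, X₂ ω, X₃ ω)) x = 1/48) ∧
      entVec3 p X₁ X₂ X₃ = ![2, 2, 2, 4, 4, 4, Real.logb 2 48] := by
  obtain ⟨h1, h2, h3, h12, h13, h23, h123⟩ :=
    isUniformOn_nonzeroSumTriples (Fintype.equivFin (Fin 4 × Fin 4 × Fin 4)).symm
  have hS : #(nonzeroSumTriples (Fin 4)) = 48 := by simp [card_nonzeroSumTriples]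
  have hS₀ : (nonzeroSumTriples (Fin 4)).Nonempty := card_pos.1 (by rw [hS]; norm_num)
  have h4 : Real.logb 2 4 = 2 := by
    rw [show (4 : ℝ) = 2 ^ (2 : ℝ) by norm_num, Real.logb_rpow two_pos (by norm_num)]
  have h16 : Real.logb 2 16 = 4 := by
    rw [show (16 : ℝ) = 2 ^ (4 : ℝ) by norm_num, Real.logb_rpow two_pos (by norm_num)]
  refine ⟨_, _, _, _, _, isDist_uniformPmf _ hS₀,
    ⟨h1.qu univ_nonempty, h2.qu univ_nonempty, h3.qu univ_nonempty, h12.qu univ_nonempty,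
      h13.qu univ_nonempty, h23.qu univ_nonempty, h123.qu hS₀⟩,
    fun a => by simpa using isUniformOn_univ_iff.1 h1 a,
    fun a => by simpa using isUniformOn_univ_iff.1 h2 a,
    fun a => by simpa using isUniformOn_univ_iff.1 h3 a,
    fun y => by simpa using isUniformOn_univ_iff.1 h12 y,
    fun y => by simpa using isUniformOn_univ_iff.1 h13 y,
    fun y => by simpa using isUniformOn_univ_iff.1 h23 y,
    h123.ncard_setOf_pr_ne_zero.trans hS, fun x => ?_, ?_⟩
  · rw [h123 x, hS]
    split_ifs <;> norm_num
  · simp [entVec3, h1.ent_eq, h2.ent_eq, h3.ent_eq, h12.ent_eq, h13.ent_eq, h23.ent_eq,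
      h123.ent_eq, hS, h4, h16]
end

section
/- The vector f = (2, 2, 2, 4, 4, 4, log₂ 48) ∈ ℝ^7 satisfies f = (log₂ 3)·e_1 + (log₂ 3)·e_2 + (log₂ 3)·e_3 + (log₂(4/3))·e_{123'}, and f cannot be written as a nonnegative linear combination of any proper subset of {e_1, e_2, e_3, e_{123'}}. -/
open Finset

noncomputable def f : Fin 7 → ℝ := ![2, 2, 2, 4, 4, 4, Real.logb 2 48]

/-! The coordinates `H(X₁)`, `H(X₂)`, `H(X₃)` and `H(X₁X₂X₃)` already determine the
coefficients: `c₁ = c₂ = c₃ = 2 - c₄` and `6 - c₄ = log₂ 48`. So the representation of `f` is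
unique, and its coefficients `log₂ 3` and `log₂ (4/3) = 6 - log₂ 48` are all positive. -/

open Real

lemma logb_two_three_add_logb_two_four_thirds : logb 2 3 + logb 2 (4 / 3) = 2 := by
  rw [← logb_mul (by norm_num) (by norm_num), show (3 : ℝ) * (4 / 3) = 2 ^ (2 : ℕ) by norm_num,
    logb_pow, logb_self_eq_one (by norm_num)]
  norm_num

lemma logb_two_forty_eight : logb 2 48 = 3 * logb 2 3 + 2 * logb 2 (4 / 3) := by
  rw [show (48 : ℝ) = 3 ^ 3 * (4 / 3) ^ 2 by norm_num, logb_mul (by norm_num) (by norm_num),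
    logb_pow, logb_pow]
  push_cast
  ring

lemma combination_eq (c₁ c₂ c₃ c₄ : ℝ) :
    c₁ • e1 + c₂ • e2 + c₃ • e3 + c₄ • e123' =
      ![c₁ + c₄, c₂ + c₄, c₃ + c₄, c₁ + c₂ + 2 * c₄, c₁ + c₃ + 2 * c₄, c₂ + c₃ + 2 * c₄,
        c₁ + c₂ + c₃ + 2 * c₄] := by
  funext i
  fin_cases i <;> simp [e1, e2, e3, e123'] <;> ring

lemma f_eq_combination_iff {c₁ c₂ c₃ c₄ : ℝ} :
    f = c₁ • e1 + c₂ • e2 + c₃ • e3 + c₄ • e123' ↔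
      c₁ = logb 2 3 ∧ c₂ = logb 2 3 ∧ c₃ = logb 2 3 ∧ c₄ = logb 2 (4 / 3) := by
  have hsum := logb_two_three_add_logb_two_four_thirds
  have h48 := logb_two_forty_eight
  rw [combination_eq]
  constructor
  · intro h
    have h₁ : (2 : ℝ) = c₁ + c₄ := congrFun h 0
    have h₂ : (2 : ℝ) = c₂ + c₄ := congrFun h 1
    have h₃ : (2 : ℝ) = c₃ + c₄ := congrFun h 2
    have h₁₂₃ : logb 2 48 = c₁ + c₂ + c₃ + 2 * c₄ := congrFun h 6
    refine ⟨?_, ?_, ?_, ?_⟩ <;> linarith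
  · rintro ⟨rfl, rfl, rfl, rfl⟩
    funext i
    fin_cases i <;> simp [f] <;> linarith

/-- f = (log₂3)e₁+(log₂3)e₂+(log₂3)e₃+(log₂(4/3))e₁₂₃', and f cannot be written as a
nonnegative combination of any proper subset of {e₁,e₂,e₃,e₁₂₃'} (equivalently, every
nonnegative representation has all four coefficients nonzero). -/
theorem stmt7 :
    f = Real.logb 2 3 • e1 + Real.logb 2 3 • e2 + Real.logb 2 3 • e3 +
        Real.logb 2 (4/3) • e123' ∧
    ∀ c1 c2 c3 c4 : ℝ, 0 ≤ c1 → 0 ≤ c2 → 0 ≤ c3 → 0 ≤ c4 →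
      f = c1 • e1 + c2 • e2 + c3 • e3 + c4 • e123' →
      c1 ≠ 0 ∧ c2 ≠ 0 ∧ c3 ≠ 0 ∧ c4 ≠ 0 := by
  have h3 : 0 < logb 2 3 := logb_pos (by norm_num) (by norm_num)
  have h43 : 0 < logb 2 (4 / 3) := logb_pos (by norm_num) (by norm_num)
  refine ⟨f_eq_combination_iff.2 ⟨rfl, rfl, rfl, rfl⟩, ?_⟩
  intro c1 c2 c3 c4 _ _ _ _ h
  obtain ⟨rfl, rfl, rfl, rfl⟩ := f_eq_combination_iff.1 h
  exact ⟨h3.ne', h3.ne', h3.ne', h43.ne'⟩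
end

section
/- There do not exist real numbers λ_1, λ_2, λ_3 ≥ 0 and a positive integer m such that (2, 2, 2, 4, 4, 4, log₂ 48) = λ_1·e_1 + λ_2·e_2 + λ_3·e_3 + (log₂ m)·e_{123'} in ℝ^7. -/
open Finset

/- Only the coordinates 0, 1, 2 and 6 matter: on them the combination is `lᵢ + c` and
`l₁ + l₂ + l₃ + 2c`, so the coefficient of `e123'` can be read off. Since the first three
target entries sum to 6, this forces `log₂ m = 6 - log₂ 48 = log₂ (4/3)`, and `4/3` is not
an integer. -/

lemma coeff_e123'_eq_of_eq_combination {v : Fin 7 → ℝ} {l1 l2 l3 c : ℝ}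
    (hv : v = l1 • e1 + l2 • e2 + l3 • e3 + c • e123') :
    c = v 0 + v 1 + v 2 - v 6 := by
  subst hv
  simp only [Pi.add_apply, Pi.smul_apply, smul_eq_mul, e1, e2, e3, e123', Matrix.cons_val]
  ring

lemma six_sub_logb_two_forty_eight : 6 - Real.logb 2 48 = Real.logb 2 (4 / 3) := by
  rw [show (4 / 3 : ℝ) = 2 ^ (6 : ℝ) / 48 by norm_num, Real.logb_div (by positivity) (by norm_num),
    Real.logb_rpow (by norm_num) (by norm_num)]

/-- There are no λ₁, λ₂, λ₃ ≥ 0 and positive integer m with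
(2,2,2,4,4,4,log₂48) = λ₁e₁ + λ₂e₂ + λ₃e₃ + (log₂ m)e₁₂₃'. -/
theorem stmt8 :
    ¬∃ (l1 l2 l3 : ℝ) (m : ℕ), 0 ≤ l1 ∧ 0 ≤ l2 ∧ 0 ≤ l3 ∧ 0 < m ∧
      (![2, 2, 2, 4, 4, 4, Real.logb 2 48] : Fin 7 → ℝ) =
        l1 • e1 + l2 • e2 + l3 • e3 + Real.logb 2 (m : ℝ) • e123' := by
  rintro ⟨l1, l2, l3, m, -, -, -, hm, hv⟩
  have hlog : Real.logb 2 m = Real.logb 2 (4 / 3) := by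
    rw [coeff_e123'_eq_of_eq_combination hv, ← six_sub_logb_two_forty_eight]
    simp only [Matrix.cons_val]
    norm_num
  have hm43 : (m : ℝ) = 4 / 3 :=
    Real.logb_injOn_pos (by norm_num) (Set.mem_Ioi.2 (by exact_mod_cast hm))
      (Set.mem_Ioi.2 (by norm_num)) hlog
  have h3m : ((3 * m : ℕ) : ℝ) = 4 := by
    push_cast
    rw [hm43]
    norm_num
  have : 3 * m = 4 := by exact_mod_cast h3m
  omega
end

section
/- There exist finite-alphabet random variables X_1, X_2, X_3 whose entropy vector h ∈ ℝ^7 satisfies all of the following: (i) h is a nonnegative linear combination of e_1, e_2, e_3, e_{12}, e_{123'}; (ii) h is not a nonnegative linear combination of any proper subset of {e_1, e_2, e_3, e_{12}, e_{123'}}; and (iii) there is no choice of λ_1, λ_2, λ_3, λ_{12}, λ_{123'} ≥ 0 with h = λ_1·e_1 + λ_2·e_2 + λ_3·e_3 + λ_{12}·e_{12} + λ_{123'}·e_{123'} such that either λ_{12} + λ_{123'} ≥ log₂ ⌈2^{λ_{123'}}⌉ or λ_{123'} = log₂ m for some positive integer m. -/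
open Finset

/-!
Take `X₁, X₂` uniform bits that agree with probability `3/4`, and `X₃` a uniform bit independent
of `X₁` and of `X₂` separately, but not of the pair. The five generators are linearly
independent and their span is cut out by `H(X₁X₃) = H(X₁) + H(X₃)`, `H(X₂X₃) = H(X₂) + H(X₃)`,
so `h` has a unique representation, read off linearly from `h`: `λ₁₂₃' = H(X₁X₂) - 3/2` and
`λ₁₂ + λ₁₂₃' = 1/2`. Since `H(X₁X₂) = 3 - (3/4) log₂ 3` lies strictly between `3/2` and `2`,
all coefficients are positive, `λ₁₂₃' ∈ (0, 1)` is not the logarithm of an integer, and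
`log₂ ⌈2^λ₁₂₃'⌉ = 1 > λ₁₂ + λ₁₂₃'`.
-/

lemma combination_eq_s15 (c1 c2 c3 c12 c123 : ℝ) :
    c1 • e1 + c2 • e2 + c3 • e3 + c12 • e12 + c123 • e123' =
      ![c1 + c12 + c123, c2 + c12 + c123, c3 + c123, c1 + c2 + c12 + 2 * c123,
        c1 + c3 + c12 + 2 * c123, c2 + c3 + c12 + 2 * c123, c1 + c2 + c3 + c12 + 2 * c123] := by
  funext i
  fin_cases i <;> simp [e1, e2, e3, e12, e123'] <;> ring

lemma eq_combination_iff (h : Fin 7 → ℝ) (c1 c2 c3 c12 c123 : ℝ) :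
    h = c1 • e1 + c2 • e2 + c3 • e3 + c12 • e12 + c123 • e123' ↔
      h 4 = h 0 + h 2 ∧ h 5 = h 1 + h 2 ∧
      c1 = h 6 - h 5 ∧ c2 = h 6 - h 4 ∧ c3 = h 6 - h 3 ∧
      c12 = h 0 + h 5 - h 2 - h 3 ∧ c123 = h 2 + h 3 - h 6 := by
  rw [combination_eq_s15]
  constructor
  · rintro rfl
    simp only [Matrix.cons_val, Fin.isValue]
    and_intros <;> ring
  · rintro ⟨h4, h5, rfl, rfl, rfl, rfl, rfl⟩
    funext i
    fin_cases i <;>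
      simp only [Fin.reduceFinMk, Fin.zero_eta, Fin.mk_one, Fin.isValue, Matrix.cons_val] <;>
      linarith

lemma four_thirds_lt_logb_two_three : 4 / 3 < Real.logb 2 3 := by
  rw [Real.lt_logb_iff_rpow_lt (by norm_num) (by norm_num)]
  refine lt_of_pow_lt_pow_left₀ 3 (by norm_num) ?_
  rw [← Real.rpow_mul_natCast (by norm_num)]
  norm_num

lemma logb_two_three_lt_two : Real.logb 2 3 < 2 := by
  rw [Real.logb_lt_iff_lt_rpow (by norm_num) (by norm_num)]
  norm_num

lemma logb_two_ceil_two_rpow_eq_one {l : ℝ} (h0 : 0 < l) (h1 : l ≤ 1) :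
    Real.logb 2 ((⌈(2:ℝ) ^ l⌉ : ℤ) : ℝ) = 1 := by
  have : ⌈(2:ℝ) ^ l⌉ = 2 := by
    rw [Int.ceil_eq_iff]
    norm_num
    exact ⟨Real.one_lt_rpow (by norm_num) h0,
      by simpa using Real.rpow_le_rpow_of_exponent_le (by norm_num : (1:ℝ) ≤ 2) h1⟩
  simp [this]

lemma logb_two_natCast_notMem_Ioo (m : ℕ) : Real.logb 2 m ∉ Set.Ioo 0 1 := by
  rintro ⟨h0, h1⟩
  rcases Nat.lt_or_ge m 2 with hm | hm
  · interval_cases m <;> simp at h0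
  · have : Real.logb 2 2 ≤ Real.logb 2 m :=
      Real.logb_le_logb_of_le (by norm_num) (by norm_num) (by exact_mod_cast hm)
    rw [Real.logb_self_eq_one (by norm_num)] at this
    linarith

noncomputable def witnessPmf : Fin 8 → ℝ := ![1/4, 1/8, 0, 1/8, 0, 1/8, 1/4, 1/8]
def witnessX₁ : Fin 8 → Fin 2 := ![0, 0, 0, 0, 1, 1, 1, 1]
def witnessX₂ : Fin 8 → Fin 2 := ![0, 0, 1, 1, 0, 0, 1, 1]
def witnessX₃ : Fin 8 → Fin 2 := ![0, 1, 0, 1, 0, 1, 0, 1]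

lemma isDist_witnessPmf : IsDist witnessPmf := by
  refine ⟨fun ω => ?_, ?_⟩
  · fin_cases ω <;> norm_num [witnessPmf]
  · norm_num [Fin.sum_univ_succ, witnessPmf]

lemma entVec3_witness : entVec3 witnessPmf witnessX₁ witnessX₂ witnessX₃ =
    ![1, 1, 1, 3 - 3 / 4 * Real.logb 2 3, 2, 2, 5 / 2] := by
  have h4 : Real.logb 2 4 = 2 := by
    rw [show (4:ℝ) = 2 ^ 2 by norm_num, Real.logb_pow]; simp
  have h8 : Real.logb 2 8 = 3 := by
    rw [show (8:ℝ) = 2 ^ 3 by norm_num, Real.logb_pow]; simp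
  norm_num [entVec3, ent, pr, Fin.sum_univ_succ, Fintype.sum_prod_type, witnessPmf, witnessX₁,
    witnessX₂, witnessX₃, Real.logb_div, h4, h8]
  ring

/-- There exist finite-alphabet random variables whose entropy vector h is (i) a
nonnegative combination of e₁,e₂,e₃,e₁₂,e₁₂₃'; (ii) not a nonnegative combination of
any proper subset of {e₁,e₂,e₃,e₁₂,e₁₂₃'}; (iii) admits no nonnegative representation
with either λ₁₂+λ₁₂₃' ≥ log₂⌈2^{λ₁₂₃'}⌉ or λ₁₂₃' = log₂ m for a positive integer m. -/
theorem stmt15 :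
    ∃ (N a₁ a₂ a₃ : ℕ) (p : Fin N → ℝ)
      (X₁ : Fin N → Fin a₁) (X₂ : Fin N → Fin a₂) (X₃ : Fin N → Fin a₃),
      IsDist p ∧
      (∃ c1 c2 c3 c12 c123 : ℝ, 0 ≤ c1 ∧ 0 ≤ c2 ∧ 0 ≤ c3 ∧ 0 ≤ c12 ∧ 0 ≤ c123 ∧
        entVec3 p X₁ X₂ X₃ =
          c1 • e1 + c2 • e2 + c3 • e3 + c12 • e12 + c123 • e123') ∧
      (∀ c1 c2 c3 c12 c123 : ℝ, 0 ≤ c1 → 0 ≤ c2 → 0 ≤ c3 → 0 ≤ c12 → 0 ≤ c123 →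
        entVec3 p X₁ X₂ X₃ =
          c1 • e1 + c2 • e2 + c3 • e3 + c12 • e12 + c123 • e123' →
        c1 ≠ 0 ∧ c2 ≠ 0 ∧ c3 ≠ 0 ∧ c12 ≠ 0 ∧ c123 ≠ 0) ∧
      ¬∃ l1 l2 l3 l12 l : ℝ, 0 ≤ l1 ∧ 0 ≤ l2 ∧ 0 ≤ l3 ∧ 0 ≤ l12 ∧ 0 ≤ l ∧
        entVec3 p X₁ X₂ X₃ =
          l1 • e1 + l2 • e2 + l3 • e3 + l12 • e12 + l • e123' ∧
        (l12 + l ≥ Real.logb 2 ((⌈(2:ℝ) ^ l⌉ : ℤ) : ℝ) ∨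
         ∃ m : ℕ, 0 < m ∧ l = Real.logb 2 (m : ℝ)) := by
  have hL₁ := four_thirds_lt_logb_two_three
  have hL₂ := logb_two_three_lt_two
  refine ⟨8, 2, 2, 2, witnessPmf, witnessX₁, witnessX₂, witnessX₃, isDist_witnessPmf, ?_, ?_, ?_⟩ <;>
    simp only [entVec3_witness, eq_combination_iff, Matrix.cons_val, Fin.isValue]
  · refine ⟨_, _, _, _, _, ?_, ?_, ?_, ?_, ?_, by norm_num, by norm_num, rfl, rfl, rfl, rfl, rfl⟩ <;>
      linarith
  · rintro c1 c2 c3 c12 c123 - - - - - ⟨-, -, rfl, rfl, rfl, rfl, rfl⟩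
    refine ⟨?_, ?_, ?_, ?_, ?_⟩ <;> apply ne_of_gt <;> linarith
  · rintro ⟨l1, l2, l3, l12, l, -, -, -, -, -, ⟨-, -, -, -, -, rfl, rfl⟩, hceil | ⟨m, -, hm⟩⟩
    · rw [logb_two_ceil_two_rpow_eq_one (by linarith) (by linarith)] at hceil
      linarith
    · exact logb_two_natCast_notMem_Ioo m (hm ▸ ⟨by linarith, by linarith⟩)
end

section
/- The polyhedral cone Γ_3 ⊆ ℝ^7, defined as the set of vectors h = (h_1, h_2, h_3, h_{12}, h_{13}, h_{23}, h_{123}) satisfying the elemental inequalities h_{123} ≥ h_{12}, h_{123} ≥ h_{13}, h_{123} ≥ h_{23}, and h_{iβ} + h_{jβ} ≥ h_β + h_{ijβ} for all distinct i, j ∈ {1,2,3} and β ⊆ {1,2,3}∖{i,j} (with h_∅ = 0), equals the conic hull of the eight vectors e_1 = (1,0,0,1,1,0,1), e_2 = (0,1,0,1,0,1,1), e_3 = (0,0,1,0,1,1,1), e_{12} = (1,1,0,1,1,1,1), e_{13} = (1,0,1,1,1,1,1), e_{23} = (0,1,1,1,1,1,1), e_{123} = (1,1,1,1,1,1,1),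 e_{123'} = (1,1,1,2,2,2,2), i.e., the set of all nonnegative linear combinations of these eight vectors. -/
open Finset

/-- The polymatroid cone Γ₃ ⊆ ℝ⁷: vectors h = (h₁,h₂,h₃,h₁₂,h₁₃,h₂₃,h₁₂₃) (indexed
0,…,6) satisfying all the elemental inequalities (with h_∅ = 0). -/
def Gamma3 : Set (Fin 7 → ℝ) :=
  {h | h 6 ≥ h 3 ∧ h 6 ≥ h 4 ∧ h 6 ≥ h 5 ∧
       h 0 + h 1 ≥ 0 + h 3 ∧ h 0 + h 2 ≥ 0 + h 4 ∧ h 1 + h 2 ≥ 0 + h 5 ∧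
       h 4 + h 5 ≥ h 2 + h 6 ∧ h 3 + h 5 ≥ h 1 + h 6 ∧ h 3 + h 4 ≥ h 0 + h 6}

/-! The elemental quantities of `∑ cₖ eₖ` are `c₀, c₁, c₂` (the `h₁₂₃ - h_{jk}`),
`c₃ + c₆, c₄ + c₆, c₅ + c₆` (the mutual informations `I(i;j)`) and `c₃ + c₇, c₄ + c₇, c₅ + c₇`
(the conditional ones `I(i;j|k)`), so nonnegative combinations lie in Γ₃.
Conversely, in every `h` each `I(i;j)` exceeds `I(i;j|k)` by the same interaction information
`I = h₁ + h₂ + h₃ - h₁₂ - h₁₃ - h₂₃ + h₁₂₃`. Taking `c₆ = I⁺`, `c₇ = I⁻` and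
`c₃ = I(1;2) - I⁺ = min (I(1;2)) (I(1;2|3))` (and likewise `c₄, c₅`) recovers `h`. -/

noncomputable def conicComb (c : Fin 8 → ℝ) : Fin 7 → ℝ :=
  c 0 • e1 + c 1 • e2 + c 2 • e3 + c 3 • e12 + c 4 • e13 + c 5 • e23 + c 6 • e123 + c 7 • e123'

lemma conicComb_eq (c : Fin 8 → ℝ) :
    conicComb c =
      ![c 0 + c 3 + c 4 + c 6 + c 7, c 1 + c 3 + c 5 + c 6 + c 7, c 2 + c 4 + c 5 + c 6 + c 7,
        c 0 + c 1 + c 3 + c 4 + c 5 + c 6 + 2 * c 7, c 0 + c 2 + c 3 + c 4 + c 5 + c 6 + 2 * c 7,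
        c 1 + c 2 + c 3 + c 4 + c 5 + c 6 + 2 * c 7,
        c 0 + c 1 + c 2 + c 3 + c 4 + c 5 + c 6 + 2 * c 7] := by
  ext i
  fin_cases i <;> simp [conicComb, e1, e2, e3, e12, e13, e23, e123, e123'] <;> ring

lemma conicComb_mem_Gamma3 {c : Fin 8 → ℝ} (hc : ∀ k, 0 ≤ c k) : conicComb c ∈ Gamma3 := by
  have := hc 0; have := hc 1; have := hc 2; have := hc 3
  have := hc 4; have := hc 5; have := hc 6; have := hc 7
  simp only [Gamma3, conicComb_eq]
  refine ⟨?_, ?_, ?_, ?_, ?_, ?_, ?_, ?_, ?_⟩ <;> simp <;> linarith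

def interactionInfo (h : Fin 7 → ℝ) : ℝ := h 0 + h 1 + h 2 - h 3 - h 4 - h 5 + h 6

lemma posPart_interactionInfo_le {h : Fin 7 → ℝ} (hh : h ∈ Gamma3) :
    (interactionInfo h)⁺ ≤ h 0 + h 1 - h 3 ∧ (interactionInfo h)⁺ ≤ h 0 + h 2 - h 4 ∧
      (interactionInfo h)⁺ ≤ h 1 + h 2 - h 5 := by
  obtain ⟨-, -, -, h₁₂, h₁₃, h₂₃, h₁₂_3, h₁₃_2, h₂₃_1⟩ := hh
  simp only [posPart_def, interactionInfo]
  exact ⟨sup_le (by linarith) (by linarith), sup_le (by linarith) (by linarith),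
    sup_le (by linarith) (by linarith)⟩

lemma exists_nonneg_conicComb_eq {h : Fin 7 → ℝ} (hh : h ∈ Gamma3) :
    ∃ c : Fin 8 → ℝ, (∀ k, 0 ≤ c k) ∧ h = conicComb c := by
  obtain ⟨hI₁₂, hI₁₃, hI₂₃⟩ := posPart_interactionInfo_le hh
  obtain ⟨h₁₂₃_12, h₁₂₃_13, h₁₂₃_23, -⟩ := hh
  set I := interactionInfo h
  refine ⟨![h 6 - h 5, h 6 - h 4, h 6 - h 3, h 0 + h 1 - h 3 - I⁺, h 0 + h 2 - h 4 - I⁺,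
    h 1 + h 2 - h 5 - I⁺, I⁺, I⁻], ?_, ?_⟩
  · intro k
    fin_cases k <;> simp <;> linarith [posPart_nonneg I, negPart_nonneg I]
  · have hI : I⁺ - I⁻ = h 0 + h 1 + h 2 - h 3 - h 4 - h 5 + h 6 := posPart_sub_negPart I
    rw [conicComb_eq]
    ext i
    fin_cases i <;> simp <;> linarith

/-- Γ₃ equals the conic hull of the eight extreme-ray generators
e₁, e₂, e₃, e₁₂, e₁₃, e₂₃, e₁₂₃, e₁₂₃'. -/
theorem stmt18 :
    Gamma3 = {h : Fin 7 → ℝ | ∃ c : Fin 8 → ℝ, (∀ k, 0 ≤ c k) ∧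
      h = c 0 • e1 + c 1 • e2 + c 2 • e3 + c 3 • e12 + c 4 • e13 + c 5 • e23 +
          c 6 • e123 + c 7 • e123'} :=
  Set.ext fun _ => ⟨exists_nonneg_conicComb_eq, fun ⟨_, hc, hh⟩ => hh ▸ conicComb_mem_Gamma3 hc⟩
end
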